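/- For the special rate point r_0 = 1 - 1/N, r_i = 1/N (i=1..N) of the 2×N broadcast-plus-unicasts traffic pattern, fanout splitting without coding requires a speedup of at least 1.5 - 1/N, since this point violates the constraint 2r_0 + Σ r_i ≤ 2 by a factor of 1.5 - 1/N. -/

import Mathlib

/-- The fanout-splitting-without-coding rate region of the `2 × N`
broadcast-plus-unicasts pattern. -/
def InFSRegion (N : ℕ) (r0 : ℝ) (r : Fin N → ℝ) : Prop :=
  (0 ≤ r0 ∧ ∀ i, 0 ≤ r i) ∧ ∑ i, r i ≤ 1 ∧ (∀ i, r0 + r i ≤ 1) ∧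
    2 * r0 + ∑ i, r i ≤ 2

theorem InFSRegion.two_mul_add_sum_div_two_le {N : ℕ} {r0 s : ℝ} {r : Fin N → ℝ} (hs : 0 < s)
    (h : InFSRegion N (r0 / s) (fun i => r i / s)) :
    (2 * r0 + ∑ i, r i) / 2 ≤ s := by
  have hload : (2 * r0 + ∑ i, r i) / s ≤ 2 := by
    simpa only [add_div, mul_div_assoc, Finset.sum_div] using h.2.2.2
  rw [div_le_iff₀ hs] at hload
  linarith

theorem sum_fin_one_div_eq_one {N : ℕ} (hN : N ≠ 0) : ∑ _i : Fin N, (1 / (N : ℝ)) = 1 := by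
  simp [hN]

/-- For the special rate point `r0 = 1 - 1/N`, `rᵢ = 1/N`, we have
`2 r0 + Σ rᵢ = 3 - 2/N`, so the point violates the fanout-splitting constraint
`2 r0 + Σ rᵢ ≤ 2` by a factor of `1.5 - 1/N`: any speedup `s > 0` rendering the
scaled point achievable with fanout splitting but no coding must satisfy
`s ≥ 1.5 - 1/N`. -/
theorem stmt17 (N : ℕ) (hN : 0 < N) :
    (2 * (1 - 1 / (N : ℝ)) + ∑ _i : Fin N, (1 / (N : ℝ)) = 3 - 2 / N) ∧
    ∀ s : ℝ, 0 < s →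
      InFSRegion N ((1 - 1 / (N : ℝ)) / s) (fun _ => (1 / (N : ℝ)) / s) →
      1.5 - 1 / (N : ℝ) ≤ s := by
  have hload : 2 * (1 - 1 / (N : ℝ)) + ∑ _i : Fin N, (1 / (N : ℝ)) = 3 - 2 / N := by
    rw [sum_fin_one_div_eq_one hN.ne']
    ring
  refine ⟨hload, fun s hs hmem => ?_⟩
  calc 1.5 - 1 / (N : ℝ) = (3 - 2 / N) / 2 := by norm_num; ring
    _ = (2 * (1 - 1 / (N : ℝ)) + ∑ _i : Fin N, (1 / (N : ℝ))) / 2 := by rw [hload]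
    _ ≤ s := hmem.two_mul_add_sum_div_two_le hs
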